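/- Let a > 1 and b ≥ 1 be real numbers, D > 0, and q(λ) = λ^b (1−λ)^a. Suppose t₁, t₂ : [0,1] → ℝ are both continuously differentiable on [0,1], twice continuously differentiable on (0,1), strictly positive on [0,1], and satisfy −D·(q tᵢ')' − λ q tᵢ = −μᵢ q tᵢ on (0,1) for real numbers μ₁, μ₂ respectively, with ∫₀¹ q tᵢ² dλ > 0 for i = 1,2. Then μ₁ = μ₂. In other words, the eigenvalue associated with a positive eigenfunction of the Sturm–Liouville problem is unique. -/

import Mathlib

open MeasureTheory Set Filter

/-!
For two solutions of `-(p u')' + V u = μ w u` and `-(p v')' + V v = ν w v`, the Lagrange flux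
`p (v u' - u v')` has derivative `(ν - μ) w u v`. When `p` vanishes at both ends of the interval,
integrating gives `(ν - μ) ∫ w u v = 0`; if `w`, `u`, `v` are positive the integral is positive,
so `μ = ν`. The stationary equation is of this form with `p = D q`, `V l = -l q l`, `w = q` and
eigenvalue `-μ`, and `q = l ^ b (1 - l) ^ a` vanishes at `0` and `1`.
-/

section SturmLiouville

variable {p w V u v : ℝ → ℝ} {a b μ ν : ℝ}

theorem hasDerivAt_lagrange_flux {x A B : ℝ} (hu : DifferentiableAt ℝ u x)
    (hv : DifferentiableAt ℝ v x) (hA : HasDerivAt (fun y => p y * deriv u y) A x)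
    (hB : HasDerivAt (fun y => p y * deriv v y) B x) :
    HasDerivAt (fun y => v y * (p y * deriv u y) - u y * (p y * deriv v y))
      (v x * A - u x * B) x :=
  ((hv.hasDerivAt.mul hA).sub (hu.hasDerivAt.mul hB)).congr_deriv (by ring)

theorem eigenvalue_sub_mul_integral_eq_zero (hab : a < b) (hp : ContinuousOn p (Icc a b))
    (hpa : p a = 0) (hpb : p b = 0) (hw : ContinuousOn w (Icc a b))
    (hu : ContDiffOn ℝ 1 u (Icc a b)) (hv : ContDiffOn ℝ 1 v (Icc a b))
    (hu_eq : ∀ x ∈ Ioo a b, HasDerivAt (fun y => p y * deriv u y) ((V x - μ * w x) * u x) x)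
    (hv_eq : ∀ x ∈ Ioo a b, HasDerivAt (fun y => p y * deriv v y) ((V x - ν * w x) * v x) x) :
    (ν - μ) * ∫ x in a..b, w x * (u x * v x) = 0 := by
  -- `derivWithin` rather than `deriv` makes the flux continuous up to the endpoints
  set F : ℝ → ℝ := fun y =>
    p y * (v y * derivWithin u (Icc a b) y - u y * derivWithin v (Icc a b) y)
  have hF_cont : ContinuousOn F (Icc a b) :=
    hp.mul ((hv.continuousOn.mul (hu.continuousOn_derivWithin (uniqueDiffOn_Icc hab) le_rfl)).sub
      (hu.continuousOn.mul (hv.continuousOn_derivWithin (uniqueDiffOn_Icc hab) le_rfl)))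
  have hF_deriv : ∀ x ∈ Ioo a b, HasDerivAt F ((ν - μ) * (w x * (u x * v x))) x := by
    intro x hx
    have hdiff : ∀ f : ℝ → ℝ, ContDiffOn ℝ 1 f (Icc a b) → DifferentiableAt ℝ f x := fun f hf =>
      (hf.contDiffAt (Icc_mem_nhds hx.1 hx.2)).differentiableAt one_ne_zero
    have hflux := hasDerivAt_lagrange_flux (hdiff u hu) (hdiff v hv) (hu_eq x hx) (hv_eq x hx)
    refine (hflux.congr_deriv (by ring)).congr_of_eventuallyEq ?_
    filter_upwards [isOpen_Ioo.mem_nhds hx] with y hy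
    simp only [F, derivWithin_of_mem_nhds (Icc_mem_nhds hy.1 hy.2)]
    ring
  have hint : IntervalIntegrable (fun x => (ν - μ) * (w x * (u x * v x))) volume a b :=
    (continuousOn_const.mul (hw.mul (hu.continuousOn.mul hv.continuousOn))).intervalIntegrable_of_Icc
      hab.le
  have hFTC := intervalIntegral.integral_eq_sub_of_hasDeriv_right_of_le hab.le hF_cont
    (fun x hx => (hF_deriv x hx).hasDerivWithinAt) hint
  simpa [intervalIntegral.integral_const_mul, F, hpa, hpb] using hFTC

theorem eigenvalue_eq_of_pos_eigenfunctions (hab : a < b) (hp : ContinuousOn p (Icc a b))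
    (hpa : p a = 0) (hpb : p b = 0) (hw : ContinuousOn w (Icc a b))
    (hw_pos : ∀ x ∈ Ioo a b, 0 < w x)
    (hu : ContDiffOn ℝ 1 u (Icc a b)) (hu_pos : ∀ x ∈ Ioo a b, 0 < u x)
    (hv : ContDiffOn ℝ 1 v (Icc a b)) (hv_pos : ∀ x ∈ Ioo a b, 0 < v x)
    (hu_eq : ∀ x ∈ Ioo a b, HasDerivAt (fun y => p y * deriv u y) ((V x - μ * w x) * u x) x)
    (hv_eq : ∀ x ∈ Ioo a b, HasDerivAt (fun y => p y * deriv v y) ((V x - ν * w x) * v x) x) :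
    μ = ν := by
  have hcross : 0 < ∫ x in a..b, w x * (u x * v x) :=
    intervalIntegral.intervalIntegral_pos_of_pos_on
      ((hw.mul (hu.continuousOn.mul hv.continuousOn)).intervalIntegrable_of_Icc hab.le)
      (fun x hx => mul_pos (hw_pos x hx) (mul_pos (hu_pos x hx) (hv_pos x hx))) hab
  have h := eigenvalue_sub_mul_integral_eq_zero hab hp hpa hpb hw hu hv hu_eq hv_eq
  linarith [(mul_eq_zero.mp h).resolve_right hcross.ne']

end SturmLiouville

section BetaWeight

variable {a b : ℝ}

theorem continuous_rpow_mul_one_sub_rpow (ha : 0 ≤ a) (hb : 0 ≤ b) :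
    Continuous fun x : ℝ => x ^ b * (1 - x) ^ a :=
  (Real.continuous_rpow_const hb).mul ((Real.continuous_rpow_const ha).comp (by fun_prop))

theorem differentiableAt_rpow_mul_one_sub_rpow {x : ℝ} (hx : x ∈ Ioo (0 : ℝ) 1) :
    DifferentiableAt ℝ (fun x : ℝ => x ^ b * (1 - x) ^ a) x := by
  have h1x : 1 - x ≠ 0 := (sub_pos.mpr hx.2).ne'
  fun_prop (disch := first | exact hx.1.ne' | exact h1x)

theorem rpow_mul_one_sub_rpow_pos {x : ℝ} (hx : x ∈ Ioo (0 : ℝ) 1) : 0 < x ^ b * (1 - x) ^ a :=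
  mul_pos (Real.rpow_pos_of_pos hx.1 b) (Real.rpow_pos_of_pos (sub_pos.mpr hx.2) a)

end BetaWeight

theorem hasDerivAt_flux_of_stationary_eq {s : Set ℝ} (hs : IsOpen s) {D μ : ℝ} {q t : ℝ → ℝ}
    (hq : ∀ x ∈ s, DifferentiableAt ℝ q x) (ht : ContDiffOn ℝ 2 t s)
    (heq : ∀ x ∈ s, -(D * deriv (fun y => q y * deriv t y) x) - x * q x * t x = -(μ * q x * t x))
    {x : ℝ} (hx : x ∈ s) :
    HasDerivAt (fun y => D * q y * deriv t y) ((-(x * q x) - -μ * q x) * t x) x := by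
  have hdt : DifferentiableAt ℝ (deriv t) x :=
    ((ht.deriv_of_isOpen hs (m := 1) (by norm_num)).contDiffAt (hs.mem_nhds hx)).differentiableAt
      one_ne_zero
  have hprod : DifferentiableAt ℝ (fun y => q y * deriv t y) x := (hq x hx).mul hdt
  have hflux : HasDerivAt (fun y => D * (q y * deriv t y)) ((-(x * q x) - -μ * q x) * t x) x :=
    (hprod.hasDerivAt.const_mul D).congr_deriv (by linear_combination -(heq x hx))
  simpa only [mul_assoc] using hflux

theorem positive_eigenvalue_unique_general
    (a b D μ₁ μ₂ : ℝ) (ha : 1 < a) (hb : 1 ≤ b)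
    (q : ℝ → ℝ) (hq : ∀ l, q l = l ^ b * (1 - l) ^ a)
    (t₁ t₂ : ℝ → ℝ)
    (ht₁1 : ContDiffOn ℝ 1 t₁ (Icc 0 1))
    (ht₁2 : ContDiffOn ℝ 2 t₁ (Ioo 0 1))
    (ht₁pos : ∀ l ∈ Icc (0:ℝ) 1, 0 < t₁ l)
    (heq₁ : ∀ l ∈ Ioo (0:ℝ) 1,
      -(D * deriv (fun x => q x * deriv t₁ x) l) - l * q l * t₁ l
        = -(μ₁ * q l * t₁ l))
    (ht₂1 : ContDiffOn ℝ 1 t₂ (Icc 0 1))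
    (ht₂2 : ContDiffOn ℝ 2 t₂ (Ioo 0 1))
    (ht₂pos : ∀ l ∈ Icc (0:ℝ) 1, 0 < t₂ l)
    (heq₂ : ∀ l ∈ Ioo (0:ℝ) 1,
      -(D * deriv (fun x => q x * deriv t₂ x) l) - l * q l * t₂ l
        = -(μ₂ * q l * t₂ l)) :
    μ₁ = μ₂ := by
  have hq_cont : ContinuousOn q (Icc 0 1) := by
    rw [funext hq]
    exact (continuous_rpow_mul_one_sub_rpow (by linarith) (by linarith)).continuousOn
  have hq_diff : ∀ x ∈ Ioo (0 : ℝ) 1, DifferentiableAt ℝ q x := by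
    rw [funext hq]
    exact fun x hx => differentiableAt_rpow_mul_one_sub_rpow hx
  have hq_zero : q 0 = 0 ∧ q 1 = 0 := by
    simp [hq, Real.zero_rpow (by linarith : b ≠ 0), Real.zero_rpow (by linarith : a ≠ 0)]
  refine neg_injective (eigenvalue_eq_of_pos_eigenfunctions (p := fun y => D * q y) (w := q)
    zero_lt_one (continuousOn_const.mul hq_cont) (by simp [hq_zero.1]) (by simp [hq_zero.2])
    hq_cont (fun x hx => hq x ▸ rpow_mul_one_sub_rpow_pos hx)
    ht₁1 (fun x hx => ht₁pos x (Ioo_subset_Icc_self hx))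
    ht₂1 (fun x hx => ht₂pos x (Ioo_subset_Icc_self hx))
    (fun x hx => hasDerivAt_flux_of_stationary_eq isOpen_Ioo hq_diff ht₁2 heq₁ hx)
    (fun x hx => hasDerivAt_flux_of_stationary_eq isOpen_Ioo hq_diff ht₂2 heq₂ hx))

/-- Theorem 1(i) (uniqueness part): the eigenvalue of the Sturm–Liouville problem
associated with a positive eigenfunction is unique. -/
theorem positive_eigenvalue_unique
    (a b D μ₁ μ₂ : ℝ) (ha : 1 < a) (hb : 1 ≤ b) (hD : 0 < D)
    (q : ℝ → ℝ) (hq : ∀ l, q l = l ^ b * (1 - l) ^ a)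
    (t₁ t₂ : ℝ → ℝ)
    (ht₁1 : ContDiffOn ℝ 1 t₁ (Icc 0 1))
    (ht₁2 : ContDiffOn ℝ 2 t₁ (Ioo 0 1))
    (ht₁pos : ∀ l ∈ Icc (0:ℝ) 1, 0 < t₁ l)
    (heq₁ : ∀ l ∈ Ioo (0:ℝ) 1,
      -(D * deriv (fun x => q x * deriv t₁ x) l) - l * q l * t₁ l
        = -(μ₁ * q l * t₁ l))
    (hQ₁ : 0 < ∫ l in Ioo (0:ℝ) 1, q l * (t₁ l) ^ 2)
    (ht₂1 : ContDiffOn ℝ 1 t₂ (Icc 0 1))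
    (ht₂2 : ContDiffOn ℝ 2 t₂ (Ioo 0 1))
    (ht₂pos : ∀ l ∈ Icc (0:ℝ) 1, 0 < t₂ l)
    (heq₂ : ∀ l ∈ Ioo (0:ℝ) 1,
      -(D * deriv (fun x => q x * deriv t₂ x) l) - l * q l * t₂ l
        = -(μ₂ * q l * t₂ l))
    (hQ₂ : 0 < ∫ l in Ioo (0:ℝ) 1, q l * (t₂ l) ^ 2) :
    μ₁ = μ₂ :=
  positive_eigenvalue_unique_general a b D μ₁ μ₂ ha hb q hq t₁ t₂ ht₁1 ht₁2 ht₁pos heq₁ ht₂1 ht₂2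
    ht₂pos heq₂
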